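/- For n ∈ ℕ, nonnegative reals α, β, k with 0 ≤ α ≤ β, and x ∈ [0,1], K_n^{(α,β,k)}(e₁;x) = nx/(n+β+1) + (2α+1)/(2(n+β+1)), where e₁(t) = t. -/

import Mathlib

open Finset Filter

/-- Pochhammer k-symbol: `(λ)_{m,k} = λ(λ+k)⋯(λ+(m-1)k)`. -/
noncomputable def pochK (lam k : ℝ) (m : ℕ) : ℝ :=
  ∏ i ∈ Finset.range m, (lam + i * k)

/-- Lupaş-type operator based on Polya distribution with Pochhammer k-symbol. -/
noncomputable def LupasP (n : ℕ) (k : ℝ) (f : ℝ → ℝ) (x : ℝ) : ℝ :=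
  (1 / pochK n k n) * ∑ m ∈ Finset.range (n + 1),
    (n.choose m : ℝ) * pochK (n * x) k m * pochK (n - n * x) k (n - m) * f (m / n)

/-- Kantorovich-Stancu modification of the Lupaş-type operator. -/
noncomputable def KantK (n : ℕ) (α β k : ℝ) (f : ℝ → ℝ) (x : ℝ) : ℝ :=
  ((n + β + 1) / pochK n k n) * ∑ m ∈ Finset.range (n + 1),
    (n.choose m : ℝ) * pochK (n * x) k m * pochK (n - n * x) k (n - m) *
      ∫ t in ((m + α) / (n + β + 1))..((m + α + 1) / (n + β + 1)), f t

/-- Modulus of continuity of `f` on `[0,1]`. -/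
noncomputable def modulus (f : ℝ → ℝ) (δ : ℝ) : ℝ :=
  sSup {y | ∃ x t : ℝ, x ∈ Set.Icc (0:ℝ) 1 ∧ t ∈ Set.Icc (0:ℝ) 1 ∧
    |t - x| ≤ δ ∧ y = |f t - f x|}

lemma pochK_succ (lam k : ℝ) (m : ℕ) :
    pochK lam k (m+1) = pochK lam k m * (lam + m * k) := by
  simp [pochK, Finset.prod_range_succ]

lemma pochK_succ' (lam k : ℝ) (m : ℕ) :
    pochK lam k (m+1) = lam * pochK (lam + k) k m := by
  unfold pochK
  rw [Finset.prod_range_succ']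
  simp only [Nat.cast_zero, zero_mul, add_zero]
  rw [mul_comm]
  congr 1
  apply Finset.prod_congr rfl
  intro i _
  push_cast; ring

lemma pochK_vandermonde (k : ℝ) : ∀ (n : ℕ) (a b : ℝ),
    ∑ m ∈ Finset.range (n+1), (n.choose m : ℝ) * pochK a k m * pochK b k (n - m)
      = pochK (a + b) k n := by
  intro n
  induction n with
  | zero => intro a b; simp [pochK]
  | succ n ih =>
    intro a b
    have hstep : ∑ m ∈ Finset.range (n+2), ((n+1).choose m : ℝ) * pochK a k m * pochK b k (n+1-m)
        = (∑ i ∈ Finset.range (n+1), (n.choose i : ℝ) * pochK a k (i+1) * pochK b k (n-i))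
          + (∑ m ∈ Finset.range (n+1), (n.choose m : ℝ) * pochK a k m * pochK b k (n+1-m)) := by
      rw [Finset.sum_range_succ']
      have h0 : ((n+1).choose 0 : ℝ) * pochK a k 0 * pochK b k (n+1-0) = pochK b k (n+1) := by
        simp [pochK]
      rw [h0]
      have h1 : ∀ i ∈ Finset.range (n+1),
          ((n+1).choose (i+1) : ℝ) * pochK a k (i+1) * pochK b k (n+1-(i+1))
          = (n.choose i : ℝ) * pochK a k (i+1) * pochK b k (n-i)
            + (n.choose (i+1) : ℝ) * pochK a k (i+1) * pochK b k (n-i) := by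
        intro i _
        rw [Nat.succ_sub_succ, Nat.choose_succ_succ]
        push_cast; ring
      rw [Finset.sum_congr rfl h1, Finset.sum_add_distrib]
      have h2 : ∑ m ∈ Finset.range (n+1), (n.choose m : ℝ) * pochK a k m * pochK b k (n+1-m)
          = (∑ i ∈ Finset.range n, (n.choose (i+1) : ℝ) * pochK a k (i+1) * pochK b k (n-i))
            + pochK b k (n+1) := by
        rw [Finset.sum_range_succ']
        simp [pochK]
      have h3 : ∑ i ∈ Finset.range (n+1), (n.choose (i+1) : ℝ) * pochK a k (i+1) * pochK b k (n-i)
          = ∑ i ∈ Finset.range n, (n.choose (i+1) : ℝ) * pochK a k (i+1) * pochK b k (n-i) := by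
        rw [Finset.sum_range_succ]
        simp
      rw [h3, h2]; ring
    rw [hstep]
    have h4 : ∀ m ∈ Finset.range (n+1),
        (n.choose m : ℝ) * pochK a k (m+1) * pochK b k (n-m)
        = ((n.choose m : ℝ) * pochK a k m * pochK b k (n-m)) * (a + m*k) := by
      intro m _
      rw [pochK_succ]; ring
    have h5 : ∀ m ∈ Finset.range (n+1),
        (n.choose m : ℝ) * pochK a k m * pochK b k (n+1-m)
        = ((n.choose m : ℝ) * pochK a k m * pochK b k (n-m)) * (b + ((n:ℝ)-(m:ℝ))*k) := by
      intro m hm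
      have hmn : m ≤ n := Nat.lt_succ_iff.mp (Finset.mem_range.mp hm)
      rw [Nat.succ_sub hmn, pochK_succ, Nat.cast_sub hmn]; ring
    rw [Finset.sum_congr rfl h4, Finset.sum_congr rfl h5]
    have h6 : ∀ m ∈ Finset.range (n+1),
        ((n.choose m : ℝ) * pochK a k m * pochK b k (n-m)) * (a + m*k)
          + ((n.choose m : ℝ) * pochK a k m * pochK b k (n-m)) * (b + ((n:ℝ)-(m:ℝ))*k)
        = ((n.choose m : ℝ) * pochK a k m * pochK b k (n-m)) * (a + b + n*k) := by
      intro m hm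
      ring
    rw [← Finset.sum_add_distrib, Finset.sum_congr rfl h6, ← Finset.sum_mul, ih, pochK_succ]

lemma pochK_moment (k : ℝ) (n : ℕ) (a b : ℝ) :
    ∑ m ∈ Finset.range (n+2), ((n+1).choose m : ℝ) * pochK a k m * pochK b k (n+1-m) * m
      = (n+1) * a * pochK (a + b + k) k n := by
  rw [Finset.sum_range_succ']
  simp only [Nat.cast_add, Nat.cast_one, Nat.cast_zero, Nat.cast_ofNat, mul_zero, add_zero]
  have h1 : ∀ i ∈ Finset.range (n+1),
      ((n+1).choose (i+1) : ℝ) * pochK a k (i+1) * pochK b k (n+1-(i+1)) * (i+1)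
      = ((n+1) * a) * ((n.choose i : ℝ) * pochK (a+k) k i * pochK b k (n-i)) := by
    intro i _
    rw [Nat.succ_sub_succ, pochK_succ']
    have hc : ((n+1).choose (i+1) : ℝ) * (i+1) = (n+1) * (n.choose i : ℝ) := by
      have := Nat.add_one_mul_choose_eq n i
      have h := congrArg (Nat.cast : ℕ → ℝ) this
      push_cast at h ⊢
      linarith [h]
    calc ((n+1).choose (i+1) : ℝ) * (a * pochK (a+k) k i) * pochK b k (n-i) * (i+1)
        = (((n+1).choose (i+1) : ℝ) * (i+1)) * (a * pochK (a+k) k i * pochK b k (n-i)) := by ring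
      _ = ((n+1) * (n.choose i : ℝ)) * (a * pochK (a+k) k i * pochK b k (n-i)) := by rw [hc]
      _ = ((n+1) * a) * ((n.choose i : ℝ) * pochK (a+k) k i * pochK b k (n-i)) := by ring
  rw [Finset.sum_congr rfl h1, ← Finset.mul_sum, pochK_vandermonde]
  have : a + k + b = a + b + k := by ring
  rw [this]

lemma pochK_pos (lam k : ℝ) (hl : 0 < lam) (hk : 0 ≤ k) (m : ℕ) : 0 < pochK lam k m := by
  apply Finset.prod_pos
  intro i _
  positivity

set_option maxHeartbeats 1000000 in
theorem kant_e1 (n : ℕ) (hn : 0 < n) (α β k : ℝ) (hα : 0 ≤ α) (hαβ : α ≤ β) (hk : 0 ≤ k)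
    (x : ℝ) (hx : x ∈ Set.Icc (0:ℝ) 1) :
    KantK n α β k (fun t => t) x =
      n * x / (n + β + 1) + (2 * α + 1) / (2 * (n + β + 1)) := by
  obtain ⟨n', rfl⟩ : ∃ n', n = n' + 1 := ⟨n - 1, (Nat.succ_pred_eq_of_pos hn).symm⟩
  have hβ : (0:ℝ) ≤ β := le_trans hα hαβ
  set N : ℝ := ((n' + 1 : ℕ) : ℝ) + β + 1 with hNdef
  have hNpos : 0 < N := by positivity
  clear_value N
  unfold KantK
  rw [← hNdef]
  have hint : ∀ m ∈ Finset.range (n' + 1 + 1),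
      ((n'+1).choose m : ℝ) * pochK ((n'+1:ℕ) * x) k m * pochK ((n'+1:ℕ) - (n'+1:ℕ) * x) k (n'+1 - m) *
        ∫ t in (((m:ℝ) + α) / N)..(((m:ℝ) + α + 1) / N), t
      = (((n'+1).choose m : ℝ) * pochK ((n'+1:ℕ) * x) k m * pochK ((n'+1:ℕ) - (n'+1:ℕ) * x) k (n'+1 - m) * m)
          * (1 / N^2)
        + (((n'+1).choose m : ℝ) * pochK ((n'+1:ℕ) * x) k m * pochK ((n'+1:ℕ) - (n'+1:ℕ) * x) k (n'+1 - m))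
          * ((2*α+1) / (2*N^2)) := by
    intro m _
    open intervalIntegral in rw [integral_id]
    have : ((((m:ℝ) + α + 1) / N)^2 - (((m:ℝ) + α) / N)^2) / 2
        = m * (1/N^2) + (2*α+1)/(2*N^2) := by
      field_simp
      ring
    rw [this]
    ring
  rw [Finset.sum_congr rfl hint, Finset.sum_add_distrib, ← Finset.sum_mul, ← Finset.sum_mul]
  have hM := pochK_moment k n' ((n'+1:ℕ) * x) ((n'+1:ℕ) - (n'+1:ℕ) * x)
  have harg : ((n'+1:ℕ):ℝ) * x + (((n'+1:ℕ):ℝ) - (n'+1:ℕ) * x) + k = ((n'+1:ℕ):ℝ) + k := by ring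
  rw [harg] at hM
  have hV := pochK_vandermonde k (n'+1) (((n'+1:ℕ):ℝ) * x) (((n'+1:ℕ):ℝ) - (n'+1:ℕ) * x)
  have harg2 : ((n'+1:ℕ):ℝ) * x + (((n'+1:ℕ):ℝ) - (n'+1:ℕ) * x) = ((n'+1:ℕ):ℝ) := by ring
  rw [harg2] at hV
  rw [hM, hV, pochK_succ']
  have hQ : 0 < pochK (((n'+1:ℕ):ℝ) + k) k n' := by
    apply pochK_pos _ _ _ hk
    positivity
  have hne : ((n'+1:ℕ):ℝ) ≠ 0 := by positivity
  have hQne := hQ.ne'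
  have halg : ∀ (Q c y w : ℝ), Q ≠ 0 → c ≠ 0 →
      N / (c * Q) * (c * (c * y) * Q * (1 / N ^ 2) + c * Q * (w / (2 * N ^ 2)))
        = c * y / N + w / (2 * N) := by
    intro Q c y w hQ0 hc0
    field_simp
  push_cast
  push_cast at hQne
  exact halg _ _ _ _ hQne (by positivity)
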